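/- Let A ∈ ℝ^{n×n} with A + Aᵀ positive definite, U ∈ ℝ^{n×k} with k < n, γ > 0, α > 0, and b ∈ ℝⁿ. For any initial x⁽⁰⁾, the alternating iteration (A + αI)x^{(m+1/2)} = (αI − γUUᵀ)x^{(m)} + b, (αI + γUUᵀ)x^{(m+1)} = (αI − A)x^{(m+1/2)} + b converges to the unique solution of (A + γUUᵀ)x = b. -/

import Mathlib

/-!
Write `S = γUUᵀ`. The Cayley identity `‖αv - Bv‖² = ‖αv + Bv‖² - 4α⟪v, Bv⟫` gives
`‖(αI - S)e‖ ≤ ‖(αI + S)e‖`, and, since the quadratic form of `A` is positive definite, a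
compactness argument on the unit sphere gives `‖(αI - A)h‖ ≤ c‖(αI + A)h‖` with `c < 1`.
Chaining the two half-steps, the errors `eₘ = xₘ - x⋆` satisfy
`‖(αI + S)eₘ₊₁‖ ≤ c‖(αI + S)eₘ‖`, and `α‖e‖ ≤ ‖(αI + S)e‖` turns this geometric decay into
convergence. The Euclidean norm enters through `Matrix.toEuclideanCLM`.
-/

open Matrix Filter

open scoped RealInnerProductSpace Topology

section CayleyTransform

variable {E : Type*} [NormedAddCommGroup E] [InnerProductSpace ℝ E]

theorem norm_smul_sub_sq_eq (α : ℝ) (v w : E) :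
    ‖α • v - w‖ ^ 2 = ‖α • v + w‖ ^ 2 - 4 * α * ⟪v, w⟫ := by
  rw [norm_sub_sq_real, norm_add_sq_real, real_inner_smul_left]
  ring

theorem norm_smul_sub_le_norm_smul_add {α : ℝ} (hα : 0 ≤ α) {v w : E} (h : 0 ≤ ⟪v, w⟫) :
    ‖α • v - w‖ ≤ ‖α • v + w‖ := by
  rw [← sq_le_sq₀ (norm_nonneg _) (norm_nonneg _), norm_smul_sub_sq_eq]
  nlinarith

theorem norm_smul_sub_lt_norm_smul_add {α : ℝ} (hα : 0 < α) {v w : E} (h : 0 < ⟪v, w⟫) :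
    ‖α • v - w‖ < ‖α • v + w‖ := by
  rw [← sq_lt_sq₀ (norm_nonneg _) (norm_nonneg _), norm_smul_sub_sq_eq]
  nlinarith

theorem mul_norm_le_norm_smul_add {α : ℝ} (hα : 0 ≤ α) {v w : E} (h : 0 ≤ ⟪v, w⟫) :
    α * ‖v‖ ≤ ‖α • v + w‖ := by
  rw [← sq_le_sq₀ (by positivity) (norm_nonneg _), norm_add_sq_real, real_inner_smul_left,
    norm_smul, Real.norm_of_nonneg hα]
  nlinarith [sq_nonneg ‖w‖]

end CayleyTransform

theorem ContinuousLinearMap.exists_lt_one_forall_norm_le_mul_norm {E F G : Type*}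
    [NormedAddCommGroup E] [NormedSpace ℝ E] [FiniteDimensional ℝ E]
    [NormedAddCommGroup F] [NormedSpace ℝ F] [NormedAddCommGroup G] [NormedSpace ℝ G]
    (P : E →L[ℝ] F) (Q : E →L[ℝ] G) (h : ∀ v ≠ 0, ‖P v‖ < ‖Q v‖) :
    ∃ c, 0 ≤ c ∧ c < 1 ∧ ∀ v, ‖P v‖ ≤ c * ‖Q v‖ := by
  rcases subsingleton_or_nontrivial E with hE | hE
  · exact ⟨0, le_rfl, one_pos, fun v => by simp [Subsingleton.elim v 0]⟩
  have hQ : ∀ v ≠ 0, 0 < ‖Q v‖ := fun v hv => (norm_nonneg _).trans_lt (h v hv)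
  set f : E → ℝ := fun v => ‖P v‖ / ‖Q v‖
  have hf : ∀ v ≠ 0, f v = f (‖v‖⁻¹ • v) := fun v hv => by
    simp only [f, map_smul, norm_smul]
    field_simp [(norm_pos_iff.2 hv).ne']
  have hsphere : ∀ v ∈ Metric.sphere (0 : E) 1, v ≠ 0 := fun v hv =>
    ne_zero_of_mem_sphere one_ne_zero ⟨v, hv⟩
  have hfcont : ContinuousOn f (Metric.sphere 0 1) :=
    ContinuousOn.div (by fun_prop) (by fun_prop) fun v hv => (hQ v (hsphere v hv)).ne'
  obtain ⟨v₀, hv₀, hmax⟩ := (isCompact_sphere (0 : E) 1).exists_isMaxOn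
    (NormedSpace.sphere_nonempty.2 zero_le_one) hfcont
  refine ⟨f v₀, by positivity, (div_lt_one (hQ v₀ (hsphere v₀ hv₀))).2 (h v₀ (hsphere v₀ hv₀)),
    fun v => ?_⟩
  rcases eq_or_ne v 0 with rfl | hv
  · simp
  rw [← div_le_iff₀ (hQ v hv)]
  exact (hf v hv).trans_le (hmax (by simp [norm_smul, hv]))

theorem tendsto_zero_of_forall_succ_le_mul {u : ℕ → ℝ} {c : ℝ} (hu : ∀ m, 0 ≤ u m) (hc₀ : 0 ≤ c)
    (hc₁ : c < 1) (h : ∀ m, u (m + 1) ≤ c * u m) : Tendsto u atTop (𝓝 0) := by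
  refine squeeze_zero hu (fun m => le_geom hc₀ m fun k _ => h k) ?_
  simpa using (tendsto_pow_atTop_nhds_zero_of_lt_one hc₀ hc₁).mul_const (u 0)

section Splitting

variable {E : Type*} [NormedAddCommGroup E] [InnerProductSpace ℝ E] [FiniteDimensional ℝ E]

theorem ContinuousLinearMap.existsUnique_apply_eq_of_inner_pos {T : E →L[ℝ] E}
    (hT : ∀ v ≠ 0, 0 < ⟪v, T v⟫) (b : E) : ∃! x, T x = b := by
  have hinj : Function.Injective T := by
    refine (injective_iff_map_eq_zero T).2 fun v hv => ?_
    by_contra hv0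
    simpa [hv] using hT v hv0
  exact (Function.bijective_iff_existsUnique T).1
    ⟨hinj, LinearMap.injective_iff_surjective.1 hinj⟩ b

variable {A S : E →L[ℝ] E} {α : ℝ}

theorem tendsto_of_alternating_splitting (hA : ∀ v ≠ 0, 0 < ⟪v, A v⟫) (hS : ∀ v, 0 ≤ ⟪v, S v⟫)
    (hα : 0 < α) {b xs : E} (hxs : (A + S) xs = b) {x xh : ℕ → E}
    (h₁ : ∀ m, (A + α • 1) (xh m) = (α • 1 - S) (x m) + b)
    (h₂ : ∀ m, (α • 1 + S) (x (m + 1)) = (α • 1 - A) (xh m) + b) :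
    Tendsto x atTop (𝓝 xs) := by
  obtain ⟨c, hc₀, hc₁, hc⟩ := (α • 1 - A).exists_lt_one_forall_norm_le_mul_norm (α • 1 + A)
    fun v hv => by simpa using norm_smul_sub_lt_norm_smul_add hα (hA v hv)
  have herr : ∀ {P Q : E →L[ℝ] E} {y z : E}, P - Q = A + S → P y = Q z + b →
      P (y - xs) = Q (z - xs) := fun hPQ hyz => by
    rw [map_sub, map_sub, hyz, ← hxs, ← hPQ, _root_.sub_apply]
    abel
  have herr₁ : ∀ m, (α • 1 + A) (xh m - xs) = (α • 1 - S) (x m - xs) := fun m =>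
    add_comm (A : E →L[ℝ] E) (α • 1) ▸ herr (by abel) (h₁ m)
  have herr₂ : ∀ m, (α • 1 + S) (x (m + 1) - xs) = (α • 1 - A) (xh m - xs) := fun m =>
    herr (by abel) (h₂ m)
  set u : ℕ → ℝ := fun m => ‖(α • 1 + S) (x m - xs)‖
  have hu : ∀ m, u (m + 1) ≤ c * u m := fun m => calc
    u (m + 1) = ‖(α • 1 - A) (xh m - xs)‖ := by rw [← herr₂]
    _ ≤ c * ‖(α • 1 + A) (xh m - xs)‖ := hc _
    _ = c * ‖(α • 1 - S) (x m - xs)‖ := by rw [herr₁]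
    _ ≤ c * u m := by
      gcongr
      simpa [u] using norm_smul_sub_le_norm_smul_add hα.le (hS (x m - xs))
  have hdist : ∀ m, ‖x m - xs‖ ≤ u m / α := fun m => by
    rw [le_div_iff₀' hα]
    simpa [u] using mul_norm_le_norm_smul_add hα.le (hS (x m - xs))
  rw [tendsto_iff_norm_sub_tendsto_zero]
  refine squeeze_zero (fun _ => norm_nonneg _) hdist ?_
  simpa using (tendsto_zero_of_forall_succ_le_mul (fun _ => norm_nonneg _) hc₀ hc₁ hu).div_const α

end Splitting

theorem Matrix.dotProduct_mulVec_pos_of_posDef_add_transpose {ι : Type*} [Fintype ι]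
    {A : Matrix ι ι ℝ} (hA : (A + Aᵀ).PosDef) {v : ι → ℝ} (hv : v ≠ 0) :
    0 < v ⬝ᵥ A *ᵥ v := by
  have h := hA.dotProduct_mulVec_pos hv
  rw [star_trivial, add_mulVec, dotProduct_add, dotProduct_mulVec v Aᵀ, vecMul_transpose,
    dotProduct_comm (A *ᵥ v)] at h
  linarith

theorem stmt_6_general {n k : ℕ} (A : Matrix (Fin n) (Fin n) ℝ)
    (U : Matrix (Fin n) (Fin k) ℝ) (hA : (A + Aᵀ).PosDef)
    (α γ : ℝ) (hα : 0 < α) (hγ : 0 < γ) (b : Fin n → ℝ)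
    (x xhalf : ℕ → Fin n → ℝ)
    (hstep1 : ∀ m, (A + α • 1) *ᵥ xhalf m = (α • 1 - γ • (U * Uᵀ)) *ᵥ x m + b)
    (hstep2 : ∀ m, (α • 1 + γ • (U * Uᵀ)) *ᵥ x (m + 1) = (α • 1 - A) *ᵥ xhalf m + b) :
    ∃ xs : Fin n → ℝ, ((A + γ • (U * Uᵀ)) *ᵥ xs = b ∧
        ∀ y : Fin n → ℝ, (A + γ • (U * Uᵀ)) *ᵥ y = b → y = xs) ∧
      Tendsto x atTop (nhds xs) := by
  set S := γ • (U * Uᵀ)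
  let Φ := toEuclideanCLM (n := Fin n) (𝕜 := ℝ)
  have hA' : ∀ v ≠ 0, 0 < ⟪v, Φ A v⟫ := fun v hv => by
    rw [inner_toEuclideanCLM]
    exact dotProduct_mulVec_pos_of_posDef_add_transpose hA (by simpa using hv)
  have hS' : ∀ v, 0 ≤ ⟪v, Φ S v⟫ := fun v => by
    rw [inner_toEuclideanCLM]
    simpa using ((posSemidef_self_mul_conjTranspose U).smul hγ.le).dotProduct_mulVec_nonneg v
  obtain ⟨xs, hxs, huniq⟩ := ContinuousLinearMap.existsUnique_apply_eq_of_inner_pos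
    (T := Φ (A + S)) (fun v hv => by
      simpa [inner_add_right] using add_pos_of_pos_of_nonneg (hA' v hv) (hS' v)) (WithLp.toLp 2 b)
  have h₁ : ∀ m, (Φ A + α • 1) (WithLp.toLp 2 (xhalf m))
      = (α • 1 - Φ S) (WithLp.toLp 2 (x m)) + WithLp.toLp 2 b := fun m => by
    rw [← map_one Φ, ← map_smul, ← map_add, ← map_sub, toEuclideanCLM_toLp, toEuclideanCLM_toLp,
      hstep1]
    rfl
  have h₂ : ∀ m, (α • 1 + Φ S) (WithLp.toLp 2 (x (m + 1)))
      = (α • 1 - Φ A) (WithLp.toLp 2 (xhalf m)) + WithLp.toLp 2 b := fun m => by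
    rw [← map_one Φ, ← map_smul, ← map_add, ← map_sub, toEuclideanCLM_toLp, toEuclideanCLM_toLp,
      hstep2]
    rfl
  refine ⟨WithLp.ofLp xs, ⟨congrArg WithLp.ofLp hxs, fun y hy => ?_⟩, ?_⟩
  · exact congrArg WithLp.ofLp (huniq _ (congrArg (WithLp.toLp 2) hy))
  · have := tendsto_of_alternating_splitting hA' hS' hα (by rwa [← map_add]) h₁ h₂
    exact ((PiLp.continuous_ofLp 2 _).tendsto xs).comp this

theorem stmt_6 {n k : ℕ} (hkn : k < n) (A : Matrix (Fin n) (Fin n) ℝ)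
    (U : Matrix (Fin n) (Fin k) ℝ) (hA : (A + Aᵀ).PosDef)
    (α γ : ℝ) (hα : 0 < α) (hγ : 0 < γ) (b : Fin n → ℝ)
    (x xhalf : ℕ → Fin n → ℝ)
    (hstep1 : ∀ m, (A + α • 1) *ᵥ xhalf m = (α • 1 - γ • (U * Uᵀ)) *ᵥ x m + b)
    (hstep2 : ∀ m, (α • 1 + γ • (U * Uᵀ)) *ᵥ x (m + 1) = (α • 1 - A) *ᵥ xhalf m + b) :
    ∃ xs : Fin n → ℝ, ((A + γ • (U * Uᵀ)) *ᵥ xs = b ∧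
        ∀ y : Fin n → ℝ, (A + γ • (U * Uᵀ)) *ᵥ y = b → y = xs) ∧
      Tendsto x atTop (nhds xs) :=
  stmt_6_general A U hA α γ hα hγ b x xhalf hstep1 hstep2
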